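/- arXiv:2404.12051 — 5 statements merged into one kernel-verified Lean document; each statement's English description precedes it below -/
import Mathlib

section
/- Let V be a complex vector space of dimension n ≥ 4, W a finite-dimensional complex vector space, and ∂ : Λ²(V^∨) → W^∨ a linear map. Then the resonance of ∂ is nontrivial (i.e., there exist a, b ∈ V^∨ with a ∧ b ≠ 0 and ∂(a ∧ b) = 0) if and only if there exist linearly independent e₁, e₂, e₃, e₄ ∈ V^∨ such that the associated Pfaffian quadratic form q on W, defined by q(w) = ∂(e₁∧e₂)(w)·∂(e₃∧e₄)(w) − ∂(e₁∧e₃)(w)·∂(e₂∧e₄)(w) + ∂(e₁∧e₄)(w)·∂(e₂∧e₃)(w), has rank at most 4. -/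
open Module

/-- The wedge product `a ∧ b` of two vectors, as an element of the second exterior power. -/
noncomputable def wedge2 {M : Type*} [AddCommGroup M] [Module ℂ M] (a b : M) : ⋀[ℂ]^2 M :=
  ⟨ExteriorAlgebra.ιMulti ℂ 2 ![a, b],
    ExteriorAlgebra.ιMulti_range ℂ 2 (Set.mem_range_self _)⟩

/-- The rank of a quadratic form `q` on a finite-dimensional complex vector space `W`:
the rank of the linear map `W → W^∨` induced by its polar bilinear form
`(x, y) ↦ q (x + y) - q x - q y`. -/
noncomputable def qfRank {W : Type*} [AddCommGroup W] [Module ℂ W]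
    (q : QuadraticForm ℂ W) : ℕ :=
  Module.finrank ℂ (LinearMap.range (QuadraticMap.polarBilin q))

/-- The Pfaffian quadratic form associated to six linear functionals
`ℓ₁₂, ℓ₁₃, ℓ₁₄, ℓ₂₃, ℓ₂₄, ℓ₃₄` on `W`: the quadratic form
`w ↦ ℓ₁₂ w * ℓ₃₄ w - ℓ₁₃ w * ℓ₂₄ w + ℓ₁₄ w * ℓ₂₃ w`. -/
noncomputable def pfaffQF {W : Type*} [AddCommGroup W] [Module ℂ W]
    (l12 l13 l14 l23 l24 l34 : Module.Dual ℂ W) : QuadraticForm ℂ W :=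
  QuadraticMap.linMulLin l12 l34 - QuadraticMap.linMulLin l13 l24 +
    QuadraticMap.linMulLin l14 l23

set_option linter.unusedTactic false
set_option linter.unreachableTactic false
set_option linter.unusedSectionVars false
set_option maxHeartbeats 1000000

namespace ResAux

open ExteriorAlgebra

variable {M : Type*} [AddCommGroup M] [Module ℂ M]

lemma iMulti_two (a b : M) : ιMulti ℂ 2 ![a, b] = ι ℂ a * ι ℂ b := by
  rw [ιMulti_succ_apply, ιMulti_succ_apply, ιMulti_zero_apply]
  simp [Matrix.vecTail]

lemma wedge2_coe (a b : M) : (wedge2 a b : ExteriorAlgebra ℂ M) = ι ℂ a * ι ℂ b :=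
  iMulti_two a b

lemma swap_wp (a b : M) : ι ℂ b * ι ℂ a = -(ι ℂ a * ι ℂ b) :=
  eq_neg_of_add_eq_zero_right (ι_add_mul_swap (R := ℂ) a b)

/-- explicit rank-2 alternating form from two covectors -/
noncomputable def alt2 (α β : Module.Dual ℂ M) : M [⋀^Fin 2]→ₗ[ℂ] ℂ where
  toFun v := α (v 0) * β (v 1) - α (v 1) * β (v 0)
  map_update_add' v i x y := by
    fin_cases i <;> simp [Function.update_apply] <;> ring
  map_update_smul' v i r x := by
    fin_cases i <;> simp [Function.update_apply] <;> ring
  map_eq_zero_of_eq' v i j h hij := by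
    fin_cases i <;> fin_cases j <;> simp_all

lemma wp_ne_zero {a b : M} (h : LinearIndependent ℂ ![a, b]) :
    ι ℂ a * ι ℂ b ≠ 0 := by
  -- get separating functionals
  have hba : a ∉ Submodule.span ℂ {b} := by
    rw [Submodule.mem_span_singleton]
    rintro ⟨r, hr⟩
    have := Fintype.linearIndependent_iff.mp h ![(-1 : ℂ), r] (by
      simp [Fin.sum_univ_two, hr.symm]) 0
    simp at this
  have hab : b ∉ Submodule.span ℂ {a} := by
    rw [Submodule.mem_span_singleton]
    rintro ⟨r, hr⟩
    have := Fintype.linearIndependent_iff.mp h ![r, (-1 : ℂ)] (by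
      simp [Fin.sum_univ_two, hr.symm]) 1
    simp at this
  obtain ⟨α, hα1, hα2⟩ := Submodule.exists_dual_map_eq_bot_of_notMem hba inferInstance
  obtain ⟨β, hβ1, hβ2⟩ := Submodule.exists_dual_map_eq_bot_of_notMem hab inferInstance
  have hαb : α b = 0 := by
    have : α b ∈ Submodule.map α (Submodule.span ℂ {b}) :=
      Submodule.mem_map_of_mem (Submodule.mem_span_singleton_self b)
    rw [hα2] at this; simpa using this
  have hβa : β a = 0 := by
    have : β a ∈ Submodule.map β (Submodule.span ℂ {a}) :=
      Submodule.mem_map_of_mem (Submodule.mem_span_singleton_self a)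
    rw [hβ2] at this; simpa using this
  intro hz
  have h0 : liftAlternating (R := ℂ) (M := M) (N := ℂ)
      (Function.update 0 2 (alt2 α β)) (ιMulti ℂ 2 ![a, b]) = 0 := by
    rw [iMulti_two, hz, map_zero]
  rw [liftAlternating_apply_ιMulti, Function.update_self] at h0
  simp only [alt2, AlternatingMap.coe_mk, MultilinearMap.coe_mk] at h0
  simp only [Matrix.cons_val_zero, Matrix.cons_val_one, Matrix.head_cons, hαb, hβa] at h0
  exact mul_ne_zero hα1 hβ1 (by linear_combination h0)


/-- a linear combination of four vectors -/
noncomputable def lc (e : Fin 4 → M) (u : Fin 4 → ℂ) : M := ∑ k, u k • e k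

/-- generic expansion of a wedge of two linear combinations -/
lemma expand (e : Fin 4 → M) (u v : Fin 4 → ℂ) :
    ι ℂ (lc e u) * ι ℂ (lc e v) =
      (u 0 * v 1 - u 1 * v 0) • (ι ℂ (e 0) * ι ℂ (e 1)) +
      (u 0 * v 2 - u 2 * v 0) • (ι ℂ (e 0) * ι ℂ (e 2)) +
      (u 0 * v 3 - u 3 * v 0) • (ι ℂ (e 0) * ι ℂ (e 3)) +
      (u 1 * v 2 - u 2 * v 1) • (ι ℂ (e 1) * ι ℂ (e 2)) +
      (u 1 * v 3 - u 3 * v 1) • (ι ℂ (e 1) * ι ℂ (e 3)) +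
      (u 2 * v 3 - u 3 * v 2) • (ι ℂ (e 2) * ι ℂ (e 3)) := by
  simp only [lc, Fin.sum_univ_four, map_add, map_smul, add_mul, mul_add,
    smul_mul_assoc, mul_smul_comm, ι_sq_zero, smul_zero]
  simp only [swap_wp (e 0) (e 1), swap_wp (e 0) (e 2), swap_wp (e 0) (e 3),
    swap_wp (e 1) (e 2), swap_wp (e 1) (e 3), swap_wp (e 2) (e 3), smul_neg]
  match_scalars <;> ring

/-- two generic linear combinations are independent -/
lemma lc_indep {e : Fin 4 → M} (he : LinearIndependent ℂ e) {u v : Fin 4 → ℂ}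
    (i j : Fin 4) (hui : u i ≠ 0) (hvj : v j ≠ 0) (hu : u j = 0) (hv : v i = 0) :
    LinearIndependent ℂ ![lc e u, lc e v] := by
  rw [Fintype.linearIndependent_iff]
  intro g hg
  have hsum : ∑ k, (g 0 * u k + g 1 * v k) • e k = 0 := by
    calc ∑ k, (g 0 * u k + g 1 * v k) • e k
        = g 0 • lc e u + g 1 • lc e v := by
          simp only [lc, Finset.smul_sum, smul_smul, ← Finset.sum_add_distrib, add_smul]
      _ = ∑ k, g k • ![lc e u, lc e v] k := by simp [Fin.sum_univ_two]
      _ = 0 := hg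
  have hco := Fintype.linearIndependent_iff.mp he _ hsum
  have hi := hco i
  have hj := hco j
  rw [hv, mul_zero, add_zero] at hi
  rw [hu, mul_zero, zero_add] at hj
  intro k
  fin_cases k
  · exact (mul_eq_zero.mp hi).resolve_right hui
  · exact (mul_eq_zero.mp hj).resolve_right hvj

/-- The distinguished 2-vector in the second exterior power. -/
noncomputable def Om2 (e : Fin 4 → M) (c : Fin 6 → ℂ) : ⋀[ℂ]^2 M :=
  c 0 • wedge2 (e 0) (e 1) + c 1 • wedge2 (e 0) (e 2) + c 2 • wedge2 (e 0) (e 3) +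
  c 3 • wedge2 (e 1) (e 2) + c 4 • wedge2 (e 1) (e 3) + c 5 • wedge2 (e 2) (e 3)

lemma Om2_coe (e : Fin 4 → M) (c : Fin 6 → ℂ) :
    (Om2 e c : ExteriorAlgebra ℂ M) =
      c 0 • (ι ℂ (e 0) * ι ℂ (e 1)) + c 1 • (ι ℂ (e 0) * ι ℂ (e 2)) +
      c 2 • (ι ℂ (e 0) * ι ℂ (e 3)) + c 3 • (ι ℂ (e 1) * ι ℂ (e 2)) +
      c 4 • (ι ℂ (e 1) * ι ℂ (e 3)) + c 5 • (ι ℂ (e 2) * ι ℂ (e 3)) := by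
  simp [Om2, wedge2_coe]

/-- decompose: if `Pf c = 0` and `c ≠ 0` then `Om2 e c` is (a multiple of) a nonzero
decomposable 2-vector. -/
lemma key_decompose {e : Fin 4 → M} (he : LinearIndependent ℂ e) {c : Fin 6 → ℂ}
    (hc : c ≠ 0) (hPf : c 0 * c 5 - c 1 * c 4 + c 2 * c 3 = 0) :
    ∃ (a b : M) (κ : ℂ), κ ≠ 0 ∧ wedge2 a b ≠ 0 ∧ wedge2 a b = κ • Om2 e c := by
  have hex : ∃ i, c i ≠ 0 := by
    by_contra h; push_neg at h; exact hc (funext h)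
  -- helper to package a case
  have main : ∀ (u v : Fin 4 → ℂ) (κ : ℂ) (i j : Fin 4), κ ≠ 0 →
      u i ≠ 0 → v j ≠ 0 → u j = 0 → v i = 0 →
      (ι ℂ (lc e u) * ι ℂ (lc e v) : ExteriorAlgebra ℂ M) = κ • (Om2 e c : ExteriorAlgebra ℂ M) →
      ∃ (a b : M) (κ : ℂ), κ ≠ 0 ∧ wedge2 a b ≠ 0 ∧ wedge2 a b = κ • Om2 e c := by
    intro u v κ i j hκ hui hvj hu hv heq
    refine ⟨lc e u, lc e v, κ, hκ, ?_, ?_⟩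
    · intro h
      exact wp_ne_zero (lc_indep he i j hui hvj hu hv)
        (by rw [← wedge2_coe, h, Submodule.coe_zero])
    · apply Subtype.ext
      rw [wedge2_coe]
      rw [heq]
      rfl
  obtain ⟨i, hi⟩ := hex
  fin_cases i
  · exact main ![c 0, 0, -(c 3), -(c 4)] ![0, c 0, c 1, c 2] (c 0) 0 1 hi (by simpa using hi)
      (by simpa using hi) (by simp) (by simp)
      (by rw [expand, Om2_coe]; simp only [Matrix.cons_val_zero, Matrix.cons_val_one,
            Matrix.head_cons, Matrix.cons_val_two, Matrix.tail_cons, Matrix.cons_val_three]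
          match_scalars <;> first | ring1 | linear_combination hPf | linear_combination -hPf)
  · exact main ![c 1, c 3, 0, -(c 5)] ![0, c 0, c 1, c 2] (c 1) 0 2 hi (by simpa using hi)
      (by simpa using hi) (by simp) (by simp)
      (by rw [expand, Om2_coe]; simp only [Matrix.cons_val_zero, Matrix.cons_val_one,
            Matrix.head_cons, Matrix.cons_val_two, Matrix.tail_cons, Matrix.cons_val_three]
          match_scalars <;> first | ring1 | linear_combination hPf | linear_combination -hPf)
  · exact main ![c 2, c 4, c 5, 0] ![0, c 0, c 1, c 2] (c 2) 0 3 hi (by simpa using hi)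
      (by simpa using hi) (by simp) (by simp)
      (by rw [expand, Om2_coe]; simp only [Matrix.cons_val_zero, Matrix.cons_val_one,
            Matrix.head_cons, Matrix.cons_val_two, Matrix.tail_cons, Matrix.cons_val_three]
          match_scalars <;> first | ring1 | linear_combination hPf | linear_combination -hPf)
  · exact main ![c 1, c 3, 0, -(c 5)] ![-(c 0), 0, c 3, c 4] (c 3) 1 2 hi (by simpa using hi)
      (by simpa using hi) (by simp) (by simp)
      (by rw [expand, Om2_coe]; simp only [Matrix.cons_val_zero, Matrix.cons_val_one,
            Matrix.head_cons, Matrix.cons_val_two, Matrix.tail_cons, Matrix.cons_val_three]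
          match_scalars <;> first | ring1 | linear_combination hPf | linear_combination -hPf)
  · exact main ![c 2, c 4, c 5, 0] ![-(c 0), 0, c 3, c 4] (c 4) 1 3 hi (by simpa using hi)
      (by simpa using hi) (by simp) (by simp)
      (by rw [expand, Om2_coe]; simp only [Matrix.cons_val_zero, Matrix.cons_val_one,
            Matrix.head_cons, Matrix.cons_val_two, Matrix.tail_cons, Matrix.cons_val_three]
          match_scalars <;> first | ring1 | linear_combination hPf | linear_combination -hPf)
  · exact main ![c 2, c 4, c 5, 0] ![-(c 1), -(c 3), 0, c 5] (c 5) 2 3 hi (by simpa using hi)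
      (by simpa using hi) (by simp) (by simp)
      (by rw [expand, Om2_coe]; simp only [Matrix.cons_val_zero, Matrix.cons_val_one,
            Matrix.head_cons, Matrix.cons_val_two, Matrix.tail_cons, Matrix.cons_val_three]
          match_scalars <;> first | ring1 | linear_combination hPf | linear_combination -hPf)




variable {W : Type*} [AddCommGroup W] [Module ℂ W] [FiniteDimensional ℂ W]

/-- the Pfaffian quadratic on `ℂ⁶` -/
def Pf (c : Fin 6 → ℂ) : ℂ := c 0 * c 5 - c 1 * c 4 + c 2 * c 3

/-- the linear map `ℂ⁶ → W^∨` determined by six functionals -/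
noncomputable def TT (l : Fin 6 → Module.Dual ℂ W) : (Fin 6 → ℂ) →ₗ[ℂ] Module.Dual ℂ W :=
  Fintype.linearCombination ℂ l

/-- the evaluation map `W → ℂ⁶` -/
noncomputable def gg (l : Fin 6 → Module.Dual ℂ W) : W →ₗ[ℂ] (Fin 6 → ℂ) :=
  LinearMap.pi l

/-- the Plücker involution of `ℂ⁶` -/
noncomputable def sg : (Fin 6 → ℂ) →ₗ[ℂ] (Fin 6 → ℂ) where
  toFun c := ![c 5, -(c 4), c 3, c 2, -(c 1), c 0]
  map_add' x y := by funext i; fin_cases i <;> first | rfl | exact neg_add _ _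
  map_smul' r x := by funext i; fin_cases i <;> first | rfl | exact (mul_neg _ _).symm

lemma sg_sg (c : Fin 6 → ℂ) : sg (sg c) = c := by
  funext i; fin_cases i <;> first | rfl | exact neg_neg _

lemma sg_apply (c : Fin 6 → ℂ) : sg c = ![c 5, -(c 4), c 3, c 2, -(c 1), c 0] := rfl

lemma Pf_sg (c : Fin 6 → ℂ) : Pf (sg c) = Pf c := by
  show c 5 * c 0 - -(c 4) * -(c 1) + c 3 * c 2 = _
  unfold Pf; ring

lemma TT_apply (l : Fin 6 → Module.Dual ℂ W) (c : Fin 6 → ℂ) (w : W) :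
    TT l c w = ∑ i, c i * l i w := by
  simp [TT, Fintype.linearCombination_apply]

lemma gg_apply (l : Fin 6 → Module.Dual ℂ W) (w : W) (i : Fin 6) :
    gg l w i = l i w := rfl

lemma finrank_range_TT (l : Fin 6 → Module.Dual ℂ W) :
    finrank ℂ (LinearMap.range (TT l)) = finrank ℂ (LinearMap.range (gg l)) := by
  have hT : TT l = (gg l).dualMap ∘ₗ
      ((LinearEquiv.piRing ℂ ℂ (Fin 6) ℂ).symm : (Fin 6 → ℂ) →ₗ[ℂ] _) := by
    apply LinearMap.ext; intro c
    apply LinearMap.ext; intro w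
    rw [TT_apply]
    simp only [LinearMap.comp_apply, LinearMap.dualMap_apply, LinearEquiv.coe_coe,
      LinearEquiv.piRing_symm_apply, LinearMap.sum_apply]
    simp [gg_apply, mul_comm]
  rw [hT, LinearMap.range_comp_of_range_eq_top _ (LinearEquiv.range _),
    LinearMap.finrank_range_dualMap_eq_finrank_range]

lemma rank_nullity_TT (l : Fin 6 → Module.Dual ℂ W) :
    finrank ℂ (LinearMap.range (TT l)) + finrank ℂ (LinearMap.ker (TT l)) = 6 := by
  rw [LinearMap.finrank_range_add_finrank_ker]
  simp [Module.finrank_fintype_fun_eq_card]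

lemma quad_root (A B C : ℂ) (hA : A ≠ 0) : ∃ x : ℂ, A * x ^ 2 + B * x + C = 0 := by
  obtain ⟨s, hs⟩ := IsAlgClosed.exists_pow_nat_eq (k := ℂ) (B ^ 2 - 4 * A * C) two_pos
  refine ⟨(s - B) / (2 * A), ?_⟩
  have h2 : (2 : ℂ) * A ≠ 0 := by simp [hA]
  field_simp
  linear_combination hs


lemma sg0 (c : Fin 6 → ℂ) : sg c 0 = c 5 := rfl
lemma sg1 (c : Fin 6 → ℂ) : sg c 1 = -(c 4) := rfl
lemma sg2 (c : Fin 6 → ℂ) : sg c 2 = c 3 := rfl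
lemma sg3 (c : Fin 6 → ℂ) : sg c 3 = c 2 := rfl
lemma sg4 (c : Fin 6 → ℂ) : sg c 4 = -(c 1) := rfl
lemma sg5 (c : Fin 6 → ℂ) : sg c 5 = c 0 := rfl

/-- the involution as a linear equivalence -/
noncomputable def sgEquiv : (Fin 6 → ℂ) ≃ₗ[ℂ] (Fin 6 → ℂ) :=
  LinearEquiv.ofLinear sg sg (LinearMap.ext sg_sg) (LinearMap.ext sg_sg)

lemma core (l : Fin 6 → Module.Dual ℂ W)
    (hq : finrank ℂ (LinearMap.range ((TT l).comp (sg.comp (gg l)))) ≤ 4) :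
    ∃ c : Fin 6 → ℂ, c ≠ 0 ∧ TT l c = 0 ∧ Pf c = 0 := by
  set T := TT l with hT
  set g := gg l with hg
  set S' := Submodule.map sg (LinearMap.range g) with hS'
  have hrange : LinearMap.range (T.comp (sg.comp g)) = Submodule.map T S' := by
    rw [LinearMap.range_comp, LinearMap.range_comp]
  have hrn := rank_nullity_TT l
  have hrT := finrank_range_TT l
  rw [← hT] at hrn hrT
  rw [show LinearMap.range (gg l) = LinearMap.range g from rfl] at hrT
  rcases Nat.lt_or_ge (finrank ℂ (LinearMap.ker T)) 2 with hk | hk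
  · rcases (by omega : finrank ℂ (LinearMap.ker T) = 0 ∨ finrank ℂ (LinearMap.ker T) = 1) with h0 | h1
    · -- T injective: rank of composite is 6 > 4, contradiction
      exfalso
      have hrg6 : finrank ℂ (LinearMap.range g) = 6 := by omega
      have hg_top : LinearMap.range g = ⊤ := by
        apply Submodule.eq_top_of_finrank_eq
        rw [hrg6, Module.finrank_fintype_fun_eq_card]; simp
      have hsg_top : S' = ⊤ := by
        rw [hS', hg_top, Submodule.map_top, LinearMap.range_eq_top]
        intro c; exact ⟨sg c, sg_sg c⟩
      rw [hrange, hsg_top, Submodule.map_top] at hq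
      omega
    · -- one-dimensional kernel
      obtain ⟨v, hv0, hvspan⟩ := (finrank_eq_one_iff' (K := ℂ)
        (V := ↥(LinearMap.ker T))).mp h1
      set c₀ : Fin 6 → ℂ := (v : Fin 6 → ℂ) with hc₀
      have hc₀ker : T c₀ = 0 := LinearMap.mem_ker.mp v.2
      have hc₀ne : c₀ ≠ 0 := fun h => hv0 (Subtype.ext h)
      by_cases hPf0 : Pf c₀ = 0
      · exact ⟨c₀, hc₀ne, hc₀ker, hPf0⟩
      exfalso
      have hrg5 : finrank ℂ (LinearMap.range g) = 5 := by omega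
      have hnot : sg c₀ ∉ LinearMap.range g := by
        rintro ⟨w, hw⟩
        have h1' : T c₀ w = 0 := by rw [hc₀ker]; rfl
        rw [hT, TT_apply, Fin.sum_univ_six] at h1'
        have h2 : ∀ i, l i w = sg c₀ i := fun i => by
          rw [← hw]; rfl
        rw [h2 0, h2 1, h2 2, h2 3, h2 4, h2 5, sg0, sg1, sg2, sg3, sg4, sg5] at h1'
        apply hPf0
        have h3 : (2 : ℂ) * Pf c₀ = 0 := by rw [Pf]; linear_combination h1'
        have := mul_eq_zero.mp h3
        simpa using this
      have hS'5 : finrank ℂ ↥S' = 5 := by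
        have : S' = Submodule.map (sgEquiv : (Fin 6 → ℂ) →ₗ[ℂ] (Fin 6 → ℂ))
            (LinearMap.range g) := rfl
        rw [this, LinearEquiv.finrank_map_eq, hrg5]
      have hdisj : ∀ x, x ∈ S' → T x = 0 → x = 0 := by
        intro x hxS hxT
        obtain ⟨r, hr⟩ := hvspan ⟨x, LinearMap.mem_ker.mpr hxT⟩
        have hx : r • c₀ = x := congrArg Subtype.val hr
        by_cases hr0 : r = 0
        · rw [← hx, hr0, zero_smul]
        · exfalso
          apply hnot
          obtain ⟨y, hy, hyx⟩ := hxS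
          have hxy : sg c₀ = r⁻¹ • y := by
            have hcx : c₀ = r⁻¹ • x := by
              rw [← hx, smul_smul, inv_mul_cancel₀ hr0, one_smul]
            rw [hcx, map_smul, ← hyx, sg_sg]
          rw [hxy]
          exact Submodule.smul_mem _ _ hy
      have hker_res : LinearMap.ker (T.domRestrict S') = ⊥ := by
        rw [Submodule.eq_bot_iff]
        rintro ⟨x, hx⟩ hxk
        exact Subtype.ext (hdisj x hx hxk)
      have h5 := LinearMap.finrank_range_add_finrank_ker (T.domRestrict S')
      rw [hker_res, finrank_bot, LinearMap.range_domRestrict, hS'5, add_zero] at h5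
      rw [hrange] at hq
      omega
  · -- kernel of dimension ≥ 2: find an isotropic vector inside
    have : Nontrivial ℂ := inferInstance
    let b := Module.finBasis ℂ ↥(LinearMap.ker T)
    let i0 : Fin (finrank ℂ ↥(LinearMap.ker T)) := ⟨0, by omega⟩
    let i1 : Fin (finrank ℂ ↥(LinearMap.ker T)) := ⟨1, by omega⟩
    set c₁ : Fin 6 → ℂ := (b i0 : Fin 6 → ℂ) with hc₁
    set c₂ : Fin 6 → ℂ := (b i1 : Fin 6 → ℂ) with hc₂
    have hk₁ : T c₁ = 0 := LinearMap.mem_ker.mp (b i0).2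
    have hk₂ : T c₂ = 0 := LinearMap.mem_ker.mp (b i1).2
    have hind : LinearIndependent ℂ ![c₁, c₂] := by
      have hinj : Function.Injective (fun j : Fin 2 => if j = 0 then i0 else i1) := by
        intro x y hxy
        fin_cases x <;> fin_cases y <;> simp_all [i0, i1, Fin.ext_iff]
      have h0 := b.linearIndependent.comp _ hinj
      have h1 := h0.map' (LinearMap.ker T).subtype (Submodule.ker_subtype _)
      have : ![c₁, c₂] = (LinearMap.ker T).subtype ∘
          (b ∘ fun j : Fin 2 => if j = 0 then i0 else i1) := by
        funext j; fin_cases j <;> rfl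
      rw [this]; exact h1
    set A := Pf c₁ with hA'
    set C := Pf c₂ with hC'
    set B := c₁ 0 * c₂ 5 + c₂ 0 * c₁ 5 - c₁ 1 * c₂ 4 - c₂ 1 * c₁ 4 +
      c₁ 2 * c₂ 3 + c₂ 2 * c₁ 3 with hB'
    have hquad : ∀ x : ℂ, Pf (x • c₁ + c₂) = A * x ^ 2 + B * x + C := by
      intro x
      rw [Pf, hA', hB', hC', Pf, Pf]
      simp only [Pi.add_apply, Pi.smul_apply, smul_eq_mul]
      ring
    have hc₁ne : c₁ ≠ 0 := by
      intro h
      exact b.ne_zero i0 (by rwa [← Submodule.coe_eq_zero])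
    by_cases hA : A = 0
    · refine ⟨c₁, hc₁ne, hk₁, hA⟩
    · obtain ⟨x, hx⟩ := quad_root A B C hA
      refine ⟨x • c₁ + c₂, ?_, ?_, ?_⟩
      · intro h0
        have h1 := Fintype.linearIndependent_iff.mp hind ![x, 1] (by
          rw [Fin.sum_univ_two]
          simpa using h0) 1
        simp at h1
      · rw [map_add, map_smul, hk₁, hk₂, smul_zero, add_zero]
      · rw [hquad, hx]


lemma polarBilin_eq (l : Fin 6 → Module.Dual ℂ W) :
    QuadraticMap.polarBilin (pfaffQF (l 0) (l 1) (l 2) (l 3) (l 4) (l 5)) =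
      (TT l).comp (sg.comp (gg l)) := by
  apply LinearMap.ext; intro w
  apply LinearMap.ext; intro u
  rw [QuadraticMap.polarBilin_apply_apply, QuadraticMap.polar]
  simp only [pfaffQF, QuadraticMap.add_apply, QuadraticMap.sub_apply,
    QuadraticMap.linMulLin_apply, map_add]
  rw [LinearMap.comp_apply, LinearMap.comp_apply, TT_apply, Fin.sum_univ_six]
  rw [sg0, sg1, sg2, sg3, sg4, sg5]
  simp only [gg_apply]
  ring

lemma qfRank_eq (l : Fin 6 → Module.Dual ℂ W) :
    qfRank (pfaffQF (l 0) (l 1) (l 2) (l 3) (l 4) (l 5)) =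
      finrank ℂ (LinearMap.range ((TT l).comp (sg.comp (gg l)))) := by
  rw [qfRank, polarBilin_eq]

lemma qfRank_le_four (l1 l2 l3 l4 l5 : Module.Dual ℂ W) :
    qfRank (pfaffQF 0 l1 l2 l3 l4 l5) ≤ 4 := by
  set q := pfaffQF (0 : Module.Dual ℂ W) l1 l2 l3 l4 l5 with hq
  have h : ∀ x, QuadraticMap.polarBilin q x =
      (-(l1 x)) • l4 + (-(l4 x)) • l1 + (l2 x) • l3 + (l3 x) • l2 := by
    intro x
    apply LinearMap.ext; intro u
    rw [QuadraticMap.polarBilin_apply_apply, QuadraticMap.polar]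
    simp only [hq, pfaffQF, QuadraticMap.add_apply, QuadraticMap.sub_apply,
      QuadraticMap.linMulLin_apply, map_add, LinearMap.add_apply, LinearMap.smul_apply,
      LinearMap.zero_apply, smul_eq_mul]
    ring
  have hle : LinearMap.range (QuadraticMap.polarBilin q) ≤
      Submodule.span ℂ (Set.range ![l1, l2, l3, l4]) := by
    rintro _ ⟨x, rfl⟩
    rw [h x]
    have m : ∀ i : Fin 4, ![l1, l2, l3, l4] i ∈
        Submodule.span ℂ (Set.range ![l1, l2, l3, l4]) :=
      fun i => Submodule.subset_span ⟨i, rfl⟩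
    exact add_mem (add_mem (add_mem
      (Submodule.smul_mem _ _ (m 3)) (Submodule.smul_mem _ _ (m 0)))
      (Submodule.smul_mem _ _ (m 2))) (Submodule.smul_mem _ _ (m 1))
  classical
  calc qfRank q ≤ finrank ℂ (Submodule.span ℂ (Set.range ![l1, l2, l3, l4])) :=
        Submodule.finrank_mono hle
    _ ≤ (Set.range ![l1, l2, l3, l4]).toFinset.card := finrank_span_le_card _
    _ ≤ 4 := by
        rw [Set.toFinset_card]
        exact (Fintype.card_range_le _).trans (by simp)


section Glue

variable {M : Type*} [AddCommGroup M] [Module ℂ M]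

open ExteriorAlgebra

lemma pair_indep_of_wedge {a b : M} (h : wedge2 a b ≠ 0) : LinearIndependent ℂ ![a, b] := by
  by_contra hdep
  apply h
  apply Subtype.ext
  rw [wedge2_coe, Submodule.coe_zero]
  rw [Fintype.linearIndependent_iff] at hdep
  push_neg at hdep
  obtain ⟨g, hg, i, hi⟩ := hdep
  rw [Fin.sum_univ_two] at hg
  simp only [Matrix.cons_val_zero, Matrix.cons_val_one, Matrix.head_cons] at hg
  fin_cases i
  · have hi' : g 0 ≠ 0 := hi
    have ha : a = (g 0)⁻¹ • -(g 1 • b) := by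
      calc a = (g 0)⁻¹ • (g 0 • a) := by rw [smul_smul, inv_mul_cancel₀ hi', one_smul]
        _ = (g 0)⁻¹ • -(g 1 • b) := by rw [eq_neg_of_add_eq_zero_left hg]
    simp [ha, map_smul, map_neg, smul_mul_assoc, ι_sq_zero]
  · have hi' : g 1 ≠ 0 := hi
    have hb : b = (g 1)⁻¹ • -(g 0 • a) := by
      calc b = (g 1)⁻¹ • (g 1 • b) := by rw [smul_smul, inv_mul_cancel₀ hi', one_smul]
        _ = (g 1)⁻¹ • -(g 0 • a) := by rw [eq_neg_of_add_eq_zero_right hg]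
    simp [hb, map_smul, map_neg, mul_smul_comm, ι_sq_zero]

lemma extend_pair [FiniteDimensional ℂ M] {a b : M} (h : LinearIndependent ℂ ![a, b])
    (hdim : 4 ≤ finrank ℂ M) :
    ∃ e : Fin 4 → M, LinearIndependent ℂ e ∧ e 0 = a ∧ e 1 = b := by
  obtain ⟨x, h3⟩ := exists_linearIndependent_snoc_of_lt_finrank h (by omega)
  obtain ⟨y, h4⟩ := exists_linearIndependent_snoc_of_lt_finrank h3 (by omega)
  refine ⟨Fin.snoc (Fin.snoc ![a, b] x) y, h4, ?_, ?_⟩ <;>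
    (simp [Fin.snoc])

end Glue
end ResAux

open ResAux in
/-- Let `V` be a complex vector space of dimension `n ≥ 4`, `W` a
finite-dimensional complex vector space, and `f : Λ²(V^∨) → W^∨` a linear map. Then the
resonance of `f` is nontrivial (there exist `a, b ∈ V^∨` with `a ∧ b ≠ 0` and `f (a ∧ b) = 0`)
iff there exist linearly independent `e₁, e₂, e₃, e₄ ∈ V^∨` whose associated Pfaffian quadratic
form on `W` has rank at most `4`. -/
theorem resonance_nontrivial_iff_exists_pfaffian_rank_le_four
    {V W : Type*} [AddCommGroup V] [Module ℂ V] [FiniteDimensional ℂ V]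
    [AddCommGroup W] [Module ℂ W] [FiniteDimensional ℂ W]
    {n : ℕ} (hn : 4 ≤ n) (hdim : Module.finrank ℂ V = n)
    (f : ⋀[ℂ]^2 (Module.Dual ℂ V) →ₗ[ℂ] Module.Dual ℂ W) :
    (∃ a b : Module.Dual ℂ V, wedge2 a b ≠ 0 ∧ f (wedge2 a b) = 0) ↔
      ∃ e : Fin 4 → Module.Dual ℂ V, LinearIndependent ℂ e ∧
        qfRank (pfaffQF (f (wedge2 (e 0) (e 1))) (f (wedge2 (e 0) (e 2)))
          (f (wedge2 (e 0) (e 3))) (f (wedge2 (e 1) (e 2)))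
          (f (wedge2 (e 1) (e 3))) (f (wedge2 (e 2) (e 3)))) ≤ 4 := by
  have hdual : 4 ≤ finrank ℂ (Module.Dual ℂ V) := by
    rw [Subspace.dual_finrank_eq, hdim]; exact hn
  constructor
  · rintro ⟨a, b, hab, hfab⟩
    obtain ⟨e, he, he0, he1⟩ := extend_pair (pair_indep_of_wedge hab) hdual
    refine ⟨e, he, ?_⟩
    rw [he0, he1, hfab]
    exact qfRank_le_four _ _ _ _ _
  · rintro ⟨e, he, hrk⟩
    set l : Fin 6 → Module.Dual ℂ W :=
      ![f (wedge2 (e 0) (e 1)), f (wedge2 (e 0) (e 2)), f (wedge2 (e 0) (e 3)),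
        f (wedge2 (e 1) (e 2)), f (wedge2 (e 1) (e 3)), f (wedge2 (e 2) (e 3))] with hl
    have hrk' : finrank ℂ (LinearMap.range ((TT l).comp (sg.comp (gg l)))) ≤ 4 := by
      rw [← qfRank_eq]
      exact hrk
    obtain ⟨c, hc0, hTc, hPfc⟩ := core l hrk'
    obtain ⟨a, b, κ, hκ, hw0, hweq⟩ := key_decompose he hc0 hPfc
    refine ⟨a, b, hw0, ?_⟩
    rw [hweq, map_smul]
    have hOm : f (Om2 e c) = TT l c := by
      simp only [Om2, map_add, map_smul]
      rw [TT, Fintype.linearCombination_apply, Fin.sum_univ_six]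
      rfl
    rw [hOm, hTc, smul_zero]
end

section
/- Let V be a complex vector space of dimension n ≥ 4, W a finite-dimensional complex vector space, and ∂ : Λ²(V^∨) → W^∨ a linear map. Suppose there exist linearly independent e₁, e₂, e₃, e₄ ∈ V^∨ such that the associated Pfaffian quadratic form q on W, defined by q(w) = ∂(e₁∧e₂)(w)·∂(e₃∧e₄)(w) − ∂(e₁∧e₃)(w)·∂(e₂∧e₄)(w) + ∂(e₁∧e₄)(w)·∂(e₂∧e₃)(w), has rank at most 4. Then there exist a, b ∈ V^∨ with a ∧ b ≠ 0 and ∂(a ∧ b) = 0, i.e., the resonance of ∂ is nontrivial. -/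
open Module

section Aux

open ExteriorAlgebra

lemma wedge2_coe {M : Type*} [AddCommGroup M] [Module ℂ M] (a b : M) :
    (wedge2 a b : ExteriorAlgebra ℂ M) = ι ℂ a * ι ℂ b := by
  show ExteriorAlgebra.ιMulti ℂ 2 ![a, b] = _
  simp [ExteriorAlgebra.ιMulti_succ_apply]

lemma wedge2_expand {M : Type*} [AddCommGroup M] [Module ℂ M] (c : Fin 4 → M) (x y : Fin 4 → ℂ) :
    wedge2 (∑ i, x i • c i) (∑ i, y i • c i) =
      (x 0 * y 1 - x 1 * y 0) • wedge2 (c 0) (c 1) + (x 0 * y 2 - x 2 * y 0) • wedge2 (c 0) (c 2) +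
      (x 0 * y 3 - x 3 * y 0) • wedge2 (c 0) (c 3) + (x 1 * y 2 - x 2 * y 1) • wedge2 (c 1) (c 2) +
      (x 1 * y 3 - x 3 * y 1) • wedge2 (c 1) (c 3) + (x 2 * y 3 - x 3 * y 2) • wedge2 (c 2) (c 3) := by
  apply Subtype.ext
  push_cast [wedge2_coe]
  have hsw : ∀ i j : Fin 4, ι ℂ (c j) * ι ℂ (c i) = -(ι ℂ (c i) * ι ℂ (c j)) := fun i j =>
    eq_neg_of_add_eq_zero_right (by rw [add_comm]; exact ι_add_mul_swap _ _)
  rw [Fin.sum_univ_four, Fin.sum_univ_four]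
  simp only [map_add, map_smul, add_mul, mul_add, smul_mul_assoc, mul_smul_comm, smul_smul,
    ι_sq_zero, smul_zero, hsw 0 1, hsw 0 2, hsw 0 3, hsw 1 2, hsw 1 3, hsw 2 3]
  module

lemma wedge2_ne_zero {M : Type*} [AddCommGroup M] [Module ℂ M] (a b : M)
    (g h : M →ₗ[ℂ] ℂ) (hne : g a * h b - g b * h a ≠ 0) : wedge2 a b ≠ 0 := by
  classical
  set A : M [⋀^Fin 2]→ₗ[ℂ] ℂ :=
    (Matrix.detRowAlternating (R := ℂ) (n := Fin 2)).compLinearMap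
      (LinearMap.pi ![g, h]) with hA
  set F : ∀ i, M [⋀^Fin i]→ₗ[ℂ] ℂ := Function.update (fun _ => 0) 2 A with hF
  intro h0
  have hv : (wedge2 a b : ExteriorAlgebra ℂ M) = 0 := by rw [h0]; rfl
  have := congrArg (ExteriorAlgebra.liftAlternating (R := ℂ) F) hv
  rw [wedge2_coe] at this
  have h2 : ι ℂ a * ι ℂ b = ExteriorAlgebra.ιMulti ℂ 2 ![a, b] := (wedge2_coe a b).symm
  rw [h2, ExteriorAlgebra.liftAlternating_apply_ιMulti, map_zero] at this
  have hF2 : F 2 = A := by simp [hF]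
  rw [hF2] at this
  apply hne
  have h4 : Matrix.det ![![g a, h a], ![g b, h b]] = 0 := by
    rw [← this, hA, AlternatingMap.compLinearMap_apply]
    congr 1
    funext i j
    fin_cases i <;> fin_cases j <;> simp [LinearMap.pi_apply]
  rw [show Matrix.det ![![g a, h a], ![g b, h b]] = g a * h b - h a * g b from
    Matrix.det_fin_two_of _ _ _ _] at h4
  rw [show g a * h b - g b * h a = g a * h b - h a * g b by ring]
  simpa using h4

lemma quad_root (A B C s : ℂ) (hA : A ≠ 0) (hs : s ^ 2 = B ^ 2 - 4 * A * C) :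
    C + (-B + s) / (2 * A) * B + ((-B + s) / (2 * A)) ^ 2 * A = 0 := by
  have h2 : (2 : ℂ) * A ≠ 0 := mul_ne_zero two_ne_zero hA
  field_simp
  linear_combination hs

/-- In any submodule of `Fin 6 → ℂ` of dimension at least 2, the Klein quadric has
a nontrivial zero. -/
lemma exists_isotropic_of_two_le_finrank (K : Submodule ℂ (Fin 6 → ℂ))
    (hK : 2 ≤ finrank ℂ K) :
    ∃ p : Fin 6 → ℂ, p ∈ K ∧ p ≠ 0 ∧ p 0 * p 5 - p 1 * p 4 + p 2 * p 3 = 0 := by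
  classical
  set b := Module.finBasis ℂ K with hb
  have h0 : (0 : ℕ) < finrank ℂ K := by omega
  have h1 : (1 : ℕ) < finrank ℂ K := by omega
  set u : K := b ⟨0, h0⟩ with hu
  set v : K := b ⟨1, h1⟩ with hv
  set U : Fin 6 → ℂ := (u : Fin 6 → ℂ)
  set Vv : Fin 6 → ℂ := (v : Fin 6 → ℂ)
  set P : (Fin 6 → ℂ) → ℂ := fun p => p 0 * p 5 - p 1 * p 4 + p 2 * p 3 with hP
  by_cases hA : P Vv = 0
  · refine ⟨Vv, v.2, ?_, hA⟩
    intro h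
    have : v = 0 := Subtype.ext h
    exact b.ne_zero _ (hv ▸ this)
  · set A : ℂ := P Vv
    set B : ℂ := U 0 * Vv 5 + Vv 0 * U 5 - U 1 * Vv 4 - Vv 1 * U 4 + U 2 * Vv 3 + Vv 2 * U 3
    set C : ℂ := P U
    obtain ⟨s, hs⟩ := IsAlgClosed.exists_pow_nat_eq (k := ℂ) (B ^ 2 - 4 * A * C) (n := 2)
      (by norm_num)
    set t : ℂ := (-B + s) / (2 * A) with ht
    refine ⟨((u + t • v : K) : Fin 6 → ℂ), (u + t • v : K).2, ?_, ?_⟩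
    · intro h
      have h' : (u + t • v : K) = 0 := Subtype.ext h
      have := congrArg (fun z => b.repr z ⟨0, h0⟩) h'
      simp [hu, hv, Basis.repr_self, Finsupp.single_apply] at this
    · have hco : ∀ i, ((u + t • v : K) : Fin 6 → ℂ) i = U i + t * Vv i := by
        intro i; simp [U, Vv]
      simp only [hco]
      have expand : (U 0 + t * Vv 0) * (U 5 + t * Vv 5) - (U 1 + t * Vv 1) * (U 4 + t * Vv 4)
          + (U 2 + t * Vv 2) * (U 3 + t * Vv 3) = C + t * B + t ^ 2 * A := by
        simp only [A, B, C, hP]; ring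
      rw [expand, ht]
      exact quad_root A B C s hA hs

lemma pluecker_decomp (p : Fin 6 → ℂ) (hp : p ≠ 0)
    (hP : p 0 * p 5 - p 1 * p 4 + p 2 * p 3 = 0) :
    ∃ x y : Fin 4 → ℂ,
      x 0 * y 1 - x 1 * y 0 = p 0 ∧ x 0 * y 2 - x 2 * y 0 = p 1 ∧
      x 0 * y 3 - x 3 * y 0 = p 2 ∧ x 1 * y 2 - x 2 * y 1 = p 3 ∧
      x 1 * y 3 - x 3 * y 1 = p 4 ∧ x 2 * y 3 - x 3 * y 2 = p 5 := by
  obtain ⟨k, hk⟩ := Function.ne_iff.mp hp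
  simp only [Pi.zero_apply] at hk
  fin_cases k
  · have h0 : p 0 ≠ 0 := hk
    refine ⟨![0, 1, p 1 / p 0, p 2 / p 0], ![-(p 0), 0, p 3, p 4], ?_, ?_, ?_, ?_, ?_, ?_⟩
    all_goals simp
    all_goals field_simp
    linear_combination -hP
  · have h0 : p 1 ≠ 0 := hk
    refine ⟨![0, p 0 / p 1, 1, p 2 / p 1], ![-(p 1), -(p 3), 0, p 5], ?_, ?_, ?_, ?_, ?_, ?_⟩
    all_goals simp
    all_goals field_simp
    linear_combination hP
  · have h0 : p 2 ≠ 0 := hk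
    refine ⟨![0, p 0 / p 2, p 1 / p 2, 1], ![-(p 2), -(p 4), -(p 5), 0], ?_, ?_, ?_, ?_, ?_, ?_⟩
    all_goals simp
    all_goals field_simp
    linear_combination -hP
  · have h0 : p 3 ≠ 0 := hk
    refine ⟨![-(p 0) / p 3, 0, 1, p 4 / p 3], ![-(p 1), -(p 3), 0, p 5], ?_, ?_, ?_, ?_, ?_, ?_⟩
    all_goals simp
    all_goals field_simp
    linear_combination -hP
  · have h0 : p 4 ≠ 0 := hk
    refine ⟨![-(p 0) / p 4, 0, p 3 / p 4, 1], ![-(p 2), -(p 4), -(p 5), 0], ?_, ?_, ?_, ?_, ?_, ?_⟩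
    all_goals simp
    all_goals field_simp
    linear_combination hP
  · have h0 : p 5 ≠ 0 := hk
    refine ⟨![-(p 1) / p 5, -(p 3) / p 5, 0, 1], ![-(p 2), -(p 4), -(p 5), 0], ?_, ?_, ?_, ?_, ?_, ?_⟩
    all_goals simp
    all_goals field_simp
    linear_combination -hP

lemma sum_single_eq_self (x : Fin 4 → ℂ) : (∑ i, x i • (Pi.single i (1 : ℂ) : Fin 4 → ℂ)) = x := by
  funext j
  simp [Finset.sum_apply, Pi.single_apply]

lemma sum_single_eq_self6 (y : Fin 6 → ℂ) : (∑ i, y i • (Pi.single i (1 : ℂ) : Fin 6 → ℂ)) = y := by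
  funext j
  simp [Finset.sum_apply, Pi.single_apply]

end Aux

set_option maxHeartbeats 1000000 in
/-- If there exist linearly independent `e₁, e₂, e₃, e₄ ∈ V^∨` whose associated
Pfaffian quadratic form on `W` has rank at most `4`, then the resonance of `f` is nontrivial:
there exist `a, b ∈ V^∨` with `a ∧ b ≠ 0` and `f (a ∧ b) = 0`. -/
theorem resonance_nontrivial_of_pfaffian_rank_le_four
    {V W : Type*} [AddCommGroup V] [Module ℂ V] [FiniteDimensional ℂ V]
    [AddCommGroup W] [Module ℂ W] [FiniteDimensional ℂ W]
    {n : ℕ} (hn : 4 ≤ n) (hdim : Module.finrank ℂ V = n)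
    (f : ⋀[ℂ]^2 (Module.Dual ℂ V) →ₗ[ℂ] Module.Dual ℂ W)
    (e : Fin 4 → Module.Dual ℂ V) (he : LinearIndependent ℂ e)
    (hrank : qfRank (pfaffQF (f (wedge2 (e 0) (e 1))) (f (wedge2 (e 0) (e 2)))
      (f (wedge2 (e 0) (e 3))) (f (wedge2 (e 1) (e 2)))
      (f (wedge2 (e 1) (e 3))) (f (wedge2 (e 2) (e 3)))) ≤ 4) :
    ∃ a b : Module.Dual ℂ V, wedge2 a b ≠ 0 ∧ f (wedge2 a b) = 0 := by
  classical
  set l12 := f (wedge2 (e 0) (e 1)) with hl12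
  set l13 := f (wedge2 (e 0) (e 2)) with hl13
  set l14 := f (wedge2 (e 0) (e 3)) with hl14
  set l23 := f (wedge2 (e 1) (e 2)) with hl23
  set l24 := f (wedge2 (e 1) (e 3)) with hl24
  set l34 := f (wedge2 (e 2) (e 3)) with hl34
  set L : Fin 6 → Module.Dual ℂ W := ![l12, l13, l14, l23, l24, l34] with hL
  set T : (Fin 6 → ℂ) →ₗ[ℂ] Module.Dual ℂ W := Fintype.linearCombination ℂ L with hT
  set M' : W →ₗ[ℂ] (Fin 6 → ℂ) := LinearMap.pi ![l34, -l24, l23, l14, -l13, l12] with hM'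
  have hL0 : L 0 = l12 := rfl
  have hL1 : L 1 = l13 := rfl
  have hL2 : L 2 = l14 := rfl
  have hL3 : L 3 = l23 := rfl
  have hL4 : L 4 = l24 := rfl
  have hL5 : L 5 = l34 := rfl
  have hM0 : ∀ w : W, M' w 0 = l34 w := fun w => rfl
  have hM1 : ∀ w : W, M' w 1 = -(l24 w) := fun w => rfl
  have hM2 : ∀ w : W, M' w 2 = l23 w := fun w => rfl
  have hM3 : ∀ w : W, M' w 3 = l14 w := fun w => rfl
  have hM4 : ∀ w : W, M' w 4 = -(l13 w) := fun w => rfl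
  have hM5 : ∀ w : W, M' w 5 = l12 w := fun w => rfl
  have hTapp : ∀ (pp : Fin 6 → ℂ) (w : W), T pp w = pp 0 * l12 w + pp 1 * l13 w
      + pp 2 * l14 w + pp 3 * l23 w + pp 4 * l24 w + pp 5 * l34 w := by
    intro pp w
    rw [hT]
    rw [Fintype.linearCombination_apply]
    rw [Fin.sum_univ_six, hL0, hL1, hL2, hL3, hL4, hL5]
    simp [LinearMap.add_apply, LinearMap.smul_apply, smul_eq_mul]
  -- Step A: find a nonzero point of the Klein quadric in the kernel of `T`.
  have key : ∃ p : Fin 6 → ℂ, p ≠ 0 ∧ (p 0 * p 5 - p 1 * p 4 + p 2 * p 3 = 0) ∧ T p = 0 := by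
    set q := pfaffQF l12 l13 l14 l23 l24 l34 with hq
    have hqapp : ∀ w : W, q w = l12 w * l34 w - l13 w * l24 w + l14 w * l23 w := by
      intro w
      rw [hq]
      simp [pfaffQF, QuadraticMap.add_apply, QuadraticMap.sub_apply,
        QuadraticMap.linMulLin_apply]
    have hpolar : QuadraticMap.polarBilin q = T ∘ₗ M' := by
      refine LinearMap.ext fun w => LinearMap.ext fun z => ?_
      rw [QuadraticMap.polarBilin_apply_apply, QuadraticMap.polar, hqapp, hqapp, hqapp,
        LinearMap.comp_apply, hTapp, hM0 w, hM1 w, hM2 w, hM3 w, hM4 w, hM5 w]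
      simp only [map_add]
      ring
    have hrange : LinearMap.range (QuadraticMap.polarBilin q)
        = Submodule.map T (LinearMap.range M') := by
      rw [hpolar, LinearMap.range_comp]
    have hrk : finrank ℂ (Submodule.map T (LinearMap.range M')) ≤ 4 := by
      rw [← hrange]
      exact hrank
    have h1 : finrank ℂ (Submodule.map T (LinearMap.range M'))
        + finrank ℂ (LinearMap.ker (T ∘ₗ (LinearMap.range M').subtype))
        = finrank ℂ (LinearMap.range M') := by
      have := LinearMap.finrank_range_add_finrank_ker (T ∘ₗ (LinearMap.range M').subtype)
      rwa [LinearMap.range_comp, Submodule.range_subtype] at this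
    have h2 : finrank ℂ (LinearMap.ker (T ∘ₗ (LinearMap.range M').subtype))
        = finrank ℂ ((LinearMap.range M' ⊓ LinearMap.ker T : Submodule ℂ (Fin 6 → ℂ))) := by
      have hker : LinearMap.ker (T ∘ₗ (LinearMap.range M').subtype)
          = Submodule.comap (LinearMap.range M').subtype
              (LinearMap.range M' ⊓ LinearMap.ker T) := by
        rw [LinearMap.ker_comp]
        ext z
        simp [Submodule.mem_comap, z.2]
      rw [hker]
      exact LinearEquiv.finrank_eq (Submodule.comapSubtypeEquivOfLe inf_le_left)
    set ψ : (Fin 6 → ℂ) →ₗ[ℂ] Module.Dual ℂ (Fin 6 → ℂ) :=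
      (LinearMap.proj (R := ℂ) (φ := fun _ : Fin 6 => ℂ) 5).smulRight (LinearMap.proj (R := ℂ) (φ := fun _ : Fin 6 => ℂ) 0)
        - (LinearMap.proj (R := ℂ) (φ := fun _ : Fin 6 => ℂ) 4).smulRight (LinearMap.proj (R := ℂ) (φ := fun _ : Fin 6 => ℂ) 1)
        + (LinearMap.proj (R := ℂ) (φ := fun _ : Fin 6 => ℂ) 3).smulRight (LinearMap.proj (R := ℂ) (φ := fun _ : Fin 6 => ℂ) 2)
        + (LinearMap.proj (R := ℂ) (φ := fun _ : Fin 6 => ℂ) 2).smulRight (LinearMap.proj (R := ℂ) (φ := fun _ : Fin 6 => ℂ) 3)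
        - (LinearMap.proj (R := ℂ) (φ := fun _ : Fin 6 => ℂ) 1).smulRight (LinearMap.proj (R := ℂ) (φ := fun _ : Fin 6 => ℂ) 4)
        + (LinearMap.proj (R := ℂ) (φ := fun _ : Fin 6 => ℂ) 0).smulRight (LinearMap.proj (R := ℂ) (φ := fun _ : Fin 6 => ℂ) 5) with hψ
    have hψapp : ∀ pp y : Fin 6 → ℂ, ψ pp y = pp 5 * y 0 - pp 4 * y 1 + pp 3 * y 2
        + pp 2 * y 3 - pp 1 * y 4 + pp 0 * y 5 := by
      intro pp y
      rw [hψ]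
      simp [LinearMap.smulRight_apply, LinearMap.proj_apply, LinearMap.sub_apply,
        LinearMap.add_apply, LinearMap.smul_apply, smul_eq_mul]
    have hTψ : T = M'.dualMap ∘ₗ ψ := by
      refine LinearMap.ext fun pp => LinearMap.ext fun w => ?_
      rw [LinearMap.comp_apply, LinearMap.dualMap_apply, hψapp, hTapp,
        hM0 w, hM1 w, hM2 w, hM3 w, hM4 w, hM5 w]
      ring
    have hψsurj : Function.Surjective ψ := by
      intro ξ
      set pv : Fin 6 → ℂ := ![ξ (Pi.single 5 1), -(ξ (Pi.single 4 1)), ξ (Pi.single 3 1),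
        ξ (Pi.single 2 1), -(ξ (Pi.single 1 1)), ξ (Pi.single 0 1)] with hpv
      have pv0 : pv 0 = ξ (Pi.single 5 1) := rfl
      have pv1 : pv 1 = -(ξ (Pi.single 4 1)) := rfl
      have pv2 : pv 2 = ξ (Pi.single 3 1) := rfl
      have pv3 : pv 3 = ξ (Pi.single 2 1) := rfl
      have pv4 : pv 4 = -(ξ (Pi.single 1 1)) := rfl
      have pv5 : pv 5 = ξ (Pi.single 0 1) := rfl
      refine ⟨pv, LinearMap.ext fun y => ?_⟩
      rw [hψapp, pv0, pv1, pv2, pv3, pv4, pv5]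
      conv_rhs => rw [← sum_single_eq_self6 y]
      rw [map_sum, Fin.sum_univ_six]
      simp only [map_smul, smul_eq_mul]
      ring
    have hrangeT : finrank ℂ (LinearMap.range T) = finrank ℂ (LinearMap.range M') := by
      rw [hTψ, LinearMap.range_comp, LinearMap.range_eq_top.mpr hψsurj, Submodule.map_top]
      exact LinearMap.finrank_range_dualMap_eq_finrank_range M'
    have hrk6 : finrank ℂ (LinearMap.range T) + finrank ℂ (LinearMap.ker T) = 6 := by
      have h := LinearMap.finrank_range_add_finrank_ker T
      rwa [show finrank ℂ (Fin 6 → ℂ) = 6 by simp] at h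
    by_cases hk2 : 2 ≤ finrank ℂ (LinearMap.ker T)
    · obtain ⟨p, hpK, hp0, hPl⟩ := exists_isotropic_of_two_le_finrank (LinearMap.ker T) hk2
      exact ⟨p, hp0, hPl, hpK⟩
    · push_neg at hk2
      have hd1 : 1 ≤ finrank ℂ ((LinearMap.range M' ⊓ LinearMap.ker T :
          Submodule ℂ (Fin 6 → ℂ))) := by omega
      have hne : ∃ z : (LinearMap.range M' ⊓ LinearMap.ker T : Submodule ℂ (Fin 6 → ℂ)),
          z ≠ 0 := by
        rw [← Module.finrank_pos_iff_exists_ne_zero (R := ℂ)]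
        omega
      obtain ⟨z, hz⟩ := hne
      have hpmem := z.2
      rw [Submodule.mem_inf] at hpmem
      obtain ⟨hpR, hpK⟩ := hpmem
      obtain ⟨w, hw⟩ := hpR
      have hp0 : (z : Fin 6 → ℂ) ≠ 0 := fun h => hz (Subtype.ext h)
      have hTp : T (z : Fin 6 → ℂ) = 0 := hpK
      have e0 : l34 w = (z : Fin 6 → ℂ) 0 := by rw [← hM0 w, hw]
      have e1 : l24 w = -((z : Fin 6 → ℂ) 1) := by rw [← hw, hM1 w]; ring
      have e2 : l23 w = (z : Fin 6 → ℂ) 2 := by rw [← hM2 w, hw]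
      have e3 : l14 w = (z : Fin 6 → ℂ) 3 := by rw [← hM3 w, hw]
      have e4 : l13 w = -((z : Fin 6 → ℂ) 4) := by rw [← hw, hM4 w]; ring
      have e5 : l12 w = (z : Fin 6 → ℂ) 5 := by rw [← hM5 w, hw]
      have hTpw : (z : Fin 6 → ℂ) 0 * l12 w + (z : Fin 6 → ℂ) 1 * l13 w
          + (z : Fin 6 → ℂ) 2 * l14 w + (z : Fin 6 → ℂ) 3 * l23 w
          + (z : Fin 6 → ℂ) 4 * l24 w + (z : Fin 6 → ℂ) 5 * l34 w = 0 := by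
        rw [← hTapp (z : Fin 6 → ℂ) w, hTp]
        rfl
      rw [e0, e1, e2, e3, e4, e5] at hTpw
      refine ⟨(z : Fin 6 → ℂ), hp0, ?_, hTp⟩
      linear_combination hTpw / 2
  obtain ⟨p, hp0, hPl, hpT⟩ := key
  obtain ⟨x, y, h01, h02, h03, h12, h13, h23⟩ := pluecker_decomp p hp0 hPl
  set a := ∑ i, x i • e i with ha
  set b := ∑ i, y i • e i with hb
  have hexp : wedge2 a b = p 0 • wedge2 (e 0) (e 1) + p 1 • wedge2 (e 0) (e 2)
      + p 2 • wedge2 (e 0) (e 3) + p 3 • wedge2 (e 1) (e 2)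
      + p 4 • wedge2 (e 1) (e 3) + p 5 • wedge2 (e 2) (e 3) := by
    rw [ha, hb, wedge2_expand e x y, h01, h02, h03, h12, h13, h23]
  have hinj : LinearMap.ker (Fintype.linearCombination ℂ e) = ⊥ := by
    rw [eq_bot_iff]
    intro g hg
    rw [LinearMap.mem_ker, Fintype.linearCombination_apply] at hg
    have := Fintype.linearIndependent_iff.mp he g hg
    simpa [Submodule.mem_bot] using (funext this : g = 0)
  obtain ⟨π, hπ⟩ := (Fintype.linearCombination ℂ e).exists_leftInverse_of_injective hinj
  have hπe : ∀ i, π (e i) = Pi.single i 1 := by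
    intro i
    have h1 : Fintype.linearCombination ℂ e (Pi.single i 1) = e i := by
      simp [Fintype.linearCombination_apply_single]
    have h2 := LinearMap.congr_fun hπ (Pi.single i (1 : ℂ))
    rw [LinearMap.comp_apply, h1] at h2
    simpa using h2
  have hπa : π a = x := by
    rw [ha, map_sum]
    simp only [map_smul, hπe]
    exact sum_single_eq_self x
  have hπb : π b = y := by
    rw [hb, map_sum]
    simp only [map_smul, hπe]
    exact sum_single_eq_self y
  refine ⟨a, b, ?_, ?_⟩
  · obtain ⟨k, hk⟩ := Function.ne_iff.mp hp0
    simp only [Pi.zero_apply] at hk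
    have key2 : ∀ i j : Fin 4, x i * y j - x j * y i ≠ 0 → wedge2 a b ≠ 0 := by
      intro i j hij
      refine wedge2_ne_zero a b ((LinearMap.proj i).comp π) ((LinearMap.proj j).comp π) ?_
      simp only [LinearMap.comp_apply, LinearMap.proj_apply, hπa, hπb]
      intro hc
      apply hij
      linear_combination hc
    fin_cases k
    · exact key2 0 1 (by rw [h01]; exact hk)
    · exact key2 0 2 (by rw [h02]; exact hk)
    · exact key2 0 3 (by rw [h03]; exact hk)
    · exact key2 1 2 (by rw [h12]; exact hk)
    · exact key2 1 3 (by rw [h13]; exact hk)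
    · exact key2 2 3 (by rw [h23]; exact hk)
  · rw [hexp]
    have hTp0 : p 0 • l12 + p 1 • l13 + p 2 • l14 + p 3 • l23 + p 4 • l24 + p 5 • l34 = 0 := by
      have h := hpT
      rwa [hT, Fintype.linearCombination_apply, Fin.sum_univ_six,
        hL0, hL1, hL2, hL3, hL4, hL5] at h
    simp only [map_add, map_smul]
    rw [← hl12, ← hl13, ← hl14, ← hl23, ← hl24, ← hl34]
    exact hTp0
end

section
/- Let V be a complex vector space of dimension 4, W a finite-dimensional complex vector space, and ∂ : Λ²(V^∨) → W^∨ an injective linear map. Then for any basis e₁, e₂, e₃, e₄ of V^∨, the associated Pfaffian quadratic form q on W, defined by q(w) = ∂(e₁∧e₂)(w)·∂(e₃∧e₄)(w) − ∂(e₁∧e₃)(w)·∂(e₂∧e₄)(w) + ∂(e₁∧e₄)(w)·∂(e₂∧e₃)(w), has rank exactly 6. -/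
open Module

/-! The six functionals `∂(eᵢ ∧ eⱼ)`, `i < j`, are linearly independent, because the `eᵢ ∧ eⱼ` are
part of a basis of `Λ²(V^∨)` and `∂` is injective. Bundling them into `L : W → ℂ⁶`, which is then
surjective, the Pfaffian form is `Q₀ ∘ L` for the standard nondegenerate Pfaffian form `Q₀`
on `ℂ⁶`. Hence its polar map is `L^∨ ∘ B₀ ∘ L`, whose range is the range of the injective map
`L^∨ ∘ B₀ : ℂ⁶ → W^∨`, of dimension `6`. -/

open LinearMap in
lemma QuadraticMap.finrank_range_polarBilin_comp {R U W : Type*} [CommRing R] [AddCommGroup U]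
    [Module R U] [AddCommGroup W] [Module R W] {Q : QuadraticForm R U}
    (hQ : Function.Injective (polarBilin Q)) {L : W →ₗ[R] U} (hL : Function.Surjective L) :
    finrank R (range (polarBilin (Q.comp L))) = finrank R U := by
  have hcomp : polarBilin (Q.comp L) = (L.dualMap ∘ₗ polarBilin Q) ∘ₗ L := by
    ext; simp [polarBilin_comp]
  rw [hcomp, range_comp_of_range_eq_top _ (range_eq_top.mpr hL), finrank_range_of_inj]
  exact (dualMap_injective_of_surjective hL).comp hQ

lemma LinearMap.pi_surjective_of_linearIndependent {K W ι : Type*} [Field K] [AddCommGroup W]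
    [Module K W] [Fintype ι] {ℓ : ι → Module.Dual K W} (hℓ : LinearIndependent K ℓ) :
    Function.Surjective (LinearMap.pi ℓ) := by
  rw [← LinearMap.dualMap_injective_iff, injective_iff_map_eq_zero]
  intro φ hφ
  have hsum : ∑ i, φ (Pi.basisFun K ι i) • ℓ i = 0 := by
    ext w
    have hφw := LinearMap.congr_fun hφ w
    rw [LinearMap.dualMap_apply, ← (Pi.basisFun K ι).sum_repr (LinearMap.pi ℓ w)] at hφw
    simpa [mul_comm] using hφw
  exact (Pi.basisFun K ι).ext fun i => Fintype.linearIndependent_iff.mp hℓ _ hsum i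

lemma exteriorPower.ιMulti_family_ofCard_pair {R M I : Type*} [CommRing R] [AddCommGroup M]
    [Module R M] [LinearOrder I] (v : I → M) {i j : I} (hij : i < j) :
    ιMulti_family R 2 v (Set.powersetCard.ofCard (Finset.card_pair hij.ne)) =
      ιMulti R 2 ![v i, v j] := by
  have hmono : StrictMono ![i, j] := Fin.strictMono_iff_lt_succ.mpr (by simpa using hij)
  have horder := Finset.orderEmbOfFin_unique (Finset.card_pair hij.ne)
    (f := ![i, j]) (by simp [Fin.forall_fin_two]) hmono
  rw [ιMulti_family, Set.powersetCard.ofFinEmbEquiv_symm_apply]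
  congr 1
  ext k
  fin_cases k <;> simp [← horder]

lemma linearIndependent_wedge2_pairs {M : Type*} [AddCommGroup M] [Module ℂ M] {v : Fin 4 → M}
    (hv : LinearIndependent ℂ v) :
    LinearIndependent ℂ ![wedge2 (v 0) (v 1), wedge2 (v 0) (v 2), wedge2 (v 0) (v 3),
      wedge2 (v 1) (v 2), wedge2 (v 1) (v 3), wedge2 (v 2) (v 3)] := by
  let pair (i j : Fin 4) (h : i < j) : Set.powersetCard (Fin 4) 2 :=
    Set.powersetCard.ofCard (Finset.card_pair h.ne)
  have hwedge : ![wedge2 (v 0) (v 1), wedge2 (v 0) (v 2), wedge2 (v 0) (v 3),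
      wedge2 (v 1) (v 2), wedge2 (v 1) (v 3), wedge2 (v 2) (v 3)] =
      exteriorPower.ιMulti_family ℂ 2 v ∘ ![pair 0 1 (by decide), pair 0 2 (by decide),
        pair 0 3 (by decide), pair 1 2 (by decide), pair 1 3 (by decide), pair 2 3 (by decide)] := by
    ext k : 1
    fin_cases k <;> exact (exteriorPower.ιMulti_family_ofCard_pair v (by decide)).symm
  rw [hwedge]
  exact (exteriorPower.ιMulti_family_linearIndependent_field 2 hv).comp _ (by decide)

noncomputable def stdPfaffQF : QuadraticForm ℂ (Fin 6 → ℂ) :=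
  pfaffQF (LinearMap.proj 0) (LinearMap.proj 1) (LinearMap.proj 2) (LinearMap.proj 3)
    (LinearMap.proj 4) (LinearMap.proj 5)

lemma pfaffQF_eq_stdPfaffQF_comp {W : Type*} [AddCommGroup W] [Module ℂ W]
    (ℓ : Fin 6 → Module.Dual ℂ W) :
    pfaffQF (ℓ 0) (ℓ 1) (ℓ 2) (ℓ 3) (ℓ 4) (ℓ 5) = stdPfaffQF.comp (LinearMap.pi ℓ) :=
  rfl

lemma polarBilin_stdPfaffQF_apply (x y : Fin 6 → ℂ) :
    QuadraticMap.polarBilin stdPfaffQF x y =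
      x 0 * y 5 + x 5 * y 0 - x 1 * y 4 - x 4 * y 1 + x 2 * y 3 + x 3 * y 2 := by
  simp only [stdPfaffQF, pfaffQF, QuadraticMap.polarBilin_apply_apply, QuadraticMap.polar,
    add_apply, sub_apply, QuadraticMap.linMulLin_apply,
    LinearMap.coe_proj, Function.eval, Pi.add_apply]
  ring

lemma polarBilin_stdPfaffQF_injective :
    Function.Injective (QuadraticMap.polarBilin stdPfaffQF) := by
  rw [injective_iff_map_eq_zero]
  intro x hx
  ext i
  have h := LinearMap.congr_fun hx (Pi.single i.rev 1)
  rw [polarBilin_stdPfaffQF_apply] at h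
  fin_cases i <;> simpa using h

lemma qfRank_pfaffQF_of_linearIndependent {W : Type*} [AddCommGroup W] [Module ℂ W]
    {ℓ : Fin 6 → Module.Dual ℂ W} (hℓ : LinearIndependent ℂ ℓ) :
    qfRank (pfaffQF (ℓ 0) (ℓ 1) (ℓ 2) (ℓ 3) (ℓ 4) (ℓ 5)) = 6 := by
  rw [qfRank, pfaffQF_eq_stdPfaffQF_comp, QuadraticMap.finrank_range_polarBilin_comp
    polarBilin_stdPfaffQF_injective (LinearMap.pi_surjective_of_linearIndependent hℓ)]
  simp

theorem pfaffian_rank_eq_six_of_injective_general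
    {V W : Type*} [AddCommGroup V] [Module ℂ V]
    [AddCommGroup W] [Module ℂ W]
    (f : ⋀[ℂ]^2 (Module.Dual ℂ V) →ₗ[ℂ] Module.Dual ℂ W)
    (hf : Function.Injective f)
    (e : Basis (Fin 4) ℂ (Module.Dual ℂ V)) :
    qfRank (pfaffQF (f (wedge2 (e 0) (e 1))) (f (wedge2 (e 0) (e 2)))
      (f (wedge2 (e 0) (e 3))) (f (wedge2 (e 1) (e 2)))
      (f (wedge2 (e 1) (e 3))) (f (wedge2 (e 2) (e 3)))) = 6 := by
  have hℓ := (linearIndependent_wedge2_pairs e.linearIndependent).map' f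
    (LinearMap.ker_eq_bot.mpr hf)
  exact (qfRank_pfaffQF_of_linearIndependent hℓ :)

/-- If `V` has dimension `4` and `f : Λ²(V^∨) → W^∨` is injective, then for any
basis `e₁, e₂, e₃, e₄` of `V^∨` the associated Pfaffian quadratic form on `W` has rank
exactly `6`. -/
theorem pfaffian_rank_eq_six_of_injective
    {V W : Type*} [AddCommGroup V] [Module ℂ V] [FiniteDimensional ℂ V]
    [AddCommGroup W] [Module ℂ W] [FiniteDimensional ℂ W]
    (hdim : Module.finrank ℂ V = 4)
    (f : ⋀[ℂ]^2 (Module.Dual ℂ V) →ₗ[ℂ] Module.Dual ℂ W)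
    (hf : Function.Injective f)
    (e : Basis (Fin 4) ℂ (Module.Dual ℂ V)) :
    qfRank (pfaffQF (f (wedge2 (e 0) (e 1))) (f (wedge2 (e 0) (e 2)))
      (f (wedge2 (e 0) (e 3))) (f (wedge2 (e 1) (e 2)))
      (f (wedge2 (e 1) (e 3))) (f (wedge2 (e 2) (e 3)))) = 6 :=
  pfaffian_rank_eq_six_of_injective_general f hf e
end

section
/- Let V be a 4-dimensional complex vector space. Then every 2-dimensional linear subspace of Λ²V contains a nonzero decomposable element, i.e., a nonzero element ω of the subspace of the form ω = a ∧ b for some a, b ∈ V. -/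
open Module

namespace Decomp6

open ExteriorAlgebra

variable {V : Type*} [AddCommGroup V] [Module ℂ V]

lemma ιMulti_two (w : Fin 2 → V) :
    (ιMulti ℂ 2 w : ExteriorAlgebra ℂ V) = ι ℂ (w 0) * ι ℂ (w 1) := by
  simp [ExteriorAlgebra.ιMulti_apply, List.ofFn_succ, Matrix.vecTail, Function.comp]

lemma wedge2_coe (a b : V) :
    ((wedge2 a b : ⋀[ℂ]^2 V) : ExteriorAlgebra ℂ V) = ι ℂ a * ι ℂ b := by
  simp [wedge2, ExteriorAlgebra.ιMulti_apply, List.ofFn_succ]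

lemma ι_anticomm (a b : V) : ι ℂ b * ι ℂ a = -(ι ℂ a * ι ℂ b) := by
  rw [eq_neg_iff_add_eq_zero]; exact ExteriorAlgebra.ι_add_mul_swap b a

lemma wedge2_swap (a b : V) : wedge2 b a = -wedge2 a b := by
  apply Subtype.ext
  push_cast [wedge2_coe]
  exact ι_anticomm a b

lemma wedge2_self (a : V) : wedge2 a a = 0 := by
  apply Subtype.ext
  push_cast [wedge2_coe]
  exact ExteriorAlgebra.ι_sq_zero a

lemma key (e1 e2 e3 e4 : V) (x12 x13 x14 x23 x24 x34 : ℂ)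
    (hpf : x12 * x34 - x13 * x24 + x14 * x23 = 0) (h : x12 ≠ 0) :
    ∃ a b : V, x12 • wedge2 e1 e2 + x13 • wedge2 e1 e3 + x14 • wedge2 e1 e4 +
      x23 • wedge2 e2 e3 + x24 • wedge2 e2 e4 + x34 • wedge2 e3 e4 = wedge2 a b := by
  refine ⟨x12⁻¹ • (x12 • e1 - x23 • e3 - x24 • e4), x12 • e2 + x13 • e3 + x14 • e4, ?_⟩
  apply Subtype.ext
  push_cast [wedge2_coe]
  simp only [map_smul, map_add, map_sub, smul_mul_assoc, mul_smul_comm, mul_add, add_mul,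
    sub_mul, mul_sub, ExteriorAlgebra.ι_sq_zero,
    ι_anticomm e2 e1, ι_anticomm e3 e1, ι_anticomm e4 e1, ι_anticomm e3 e2,
    ι_anticomm e4 e2, ι_anticomm e4 e3]
  match_scalars
  all_goals field_simp
  all_goals try ring
  all_goals first | linear_combination x12 * hpf | linear_combination -x12 * hpf | linear_combination hpf | linear_combination -hpf

lemma repr6 (e : Basis (Fin 4) ℂ V) (x : ExteriorAlgebra ℂ V) (hx : x ∈ ⋀[ℂ]^2 V) :
    ∃ c : Fin 4 × Fin 4 → ℂ, x = ∑ p : Fin 4 × Fin 4, c p • (ι ℂ (e p.1) * ι ℂ (e p.2)) := by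
  rw [← ExteriorAlgebra.ιMulti_span_fixedDegree] at hx
  induction hx using Submodule.span_induction with
  | mem x hxx =>
    obtain ⟨w, rfl⟩ := hxx
    refine ⟨fun p => e.repr (w 0) p.1 * e.repr (w 1) p.2, ?_⟩
    rw [ιMulti_two]
    conv_lhs => rw [← e.sum_repr (w 0), ← e.sum_repr (w 1)]
    rw [map_sum, map_sum, Finset.sum_mul_sum]
    simp [smul_mul_assoc, mul_smul_comm, smul_smul, map_smul, Fintype.sum_prod_type,
      mul_comm]
  | zero => exact ⟨0, by simp⟩
  | add x y _ _ hx hy =>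
    obtain ⟨c, rfl⟩ := hx; obtain ⟨d, rfl⟩ := hy
    exact ⟨c + d, by simp [add_smul, Finset.sum_add_distrib]⟩
  | smul r x _ hx =>
    obtain ⟨c, rfl⟩ := hx
    exact ⟨r • c, by simp [Finset.smul_sum, smul_smul]⟩

lemma span_wedge (e : Basis (Fin 4) ℂ V) (ω : ⋀[ℂ]^2 V) :
    ∃ c : Fin 4 × Fin 4 → ℂ, ω = ∑ p : Fin 4 × Fin 4, c p • wedge2 (e p.1) (e p.2) := by
  obtain ⟨c, hc⟩ := repr6 e ω.1 ω.2
  refine ⟨c, Subtype.ext ?_⟩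
  push_cast [wedge2_coe]
  exact hc

/-- Collapse a 16-term sum to a 6-term sum. -/
lemma collapse (e : Fin 4 → V) (c : Fin 4 × Fin 4 → ℂ) :
    ∑ p : Fin 4 × Fin 4, c p • wedge2 (e p.1) (e p.2) =
      (c (0,1) - c (1,0)) • wedge2 (e 0) (e 1) + (c (0,2) - c (2,0)) • wedge2 (e 0) (e 2) +
      (c (0,3) - c (3,0)) • wedge2 (e 0) (e 3) + (c (1,2) - c (2,1)) • wedge2 (e 1) (e 2) +
      (c (1,3) - c (3,1)) • wedge2 (e 1) (e 3) + (c (2,3) - c (3,2)) • wedge2 (e 2) (e 3) := by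
  rw [Fintype.sum_prod_type]
  simp only [Fin.sum_univ_four]
  rw [wedge2_swap (e 0) (e 1), wedge2_swap (e 0) (e 2), wedge2_swap (e 0) (e 3),
    wedge2_swap (e 1) (e 2), wedge2_swap (e 1) (e 3), wedge2_swap (e 2) (e 3),
    wedge2_self (e 0), wedge2_self (e 1), wedge2_self (e 2), wedge2_self (e 3)]
  module

/-- Every nontrivial complex binary quadratic form has a nontrivial zero. -/
lemma root_exists (α β γ : ℂ) :
    ∃ s t : ℂ, ¬(s = 0 ∧ t = 0) ∧ α * s ^ 2 + β * (s * t) + γ * t ^ 2 = 0 := by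
  by_cases hα : α = 0
  · exact ⟨1, 0, by simp, by simp [hα]⟩
  · obtain ⟨z, hz⟩ := IsAlgClosed.exists_pow_nat_eq (β ^ 2 - 4 * α * γ) (n := 2) (by norm_num)
    refine ⟨(-β + z) / (2 * α), 1, by simp, ?_⟩
    field_simp
    linear_combination hz

end Decomp6

set_option synthInstance.maxHeartbeats 1000000 in
set_option maxHeartbeats 2000000 in
open Decomp6 in
/-- If `V` is a `4`-dimensional complex vector space, then every `2`-dimensional
linear subspace of `Λ²V` contains a nonzero decomposable element `ω = a ∧ b`. -/
theorem exists_decomposable_of_two_dim_subspace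
    {V : Type*} [AddCommGroup V] [Module ℂ V] [FiniteDimensional ℂ V]
    (hdim : Module.finrank ℂ V = 4)
    (P : Submodule ℂ (⋀[ℂ]^2 V)) (hP : Module.finrank ℂ P = 2) :
    ∃ ω ∈ P, ω ≠ 0 ∧ ∃ a b : V, ω = wedge2 a b := by
  classical
  have hPfd : FiniteDimensional ℂ P := FiniteDimensional.of_finrank_pos (by omega)
  let e : Basis (Fin 4) ℂ V := (Module.finBasis ℂ V).reindex (finCongr hdim)
  have hfree : Module.Free ℂ P := Module.Free.of_divisionRing ℂ P
  let bP : Basis (Fin 2) ℂ P := (Module.finBasis ℂ P).reindex (finCongr hP)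
  obtain ⟨ca, ha⟩ := span_wedge e (↑(bP 0) : ⋀[ℂ]^2 V)
  obtain ⟨cb, hb⟩ := span_wedge e (↑(bP 1) : ⋀[ℂ]^2 V)
  rw [collapse] at ha hb
  obtain ⟨s, t, hst, hroot⟩ := root_exists
    ((ca (0,1) - ca (1,0)) * (ca (2,3) - ca (3,2)) -
      (ca (0,2) - ca (2,0)) * (ca (1,3) - ca (3,1)) +
      (ca (0,3) - ca (3,0)) * (ca (1,2) - ca (2,1)))
    ((ca (0,1) - ca (1,0)) * (cb (2,3) - cb (3,2)) + (cb (0,1) - cb (1,0)) * (ca (2,3) - ca (3,2))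
      - (ca (0,2) - ca (2,0)) * (cb (1,3) - cb (3,1))
      - (cb (0,2) - cb (2,0)) * (ca (1,3) - ca (3,1))
      + (ca (0,3) - ca (3,0)) * (cb (1,2) - cb (2,1))
      + (cb (0,3) - cb (3,0)) * (ca (1,2) - ca (2,1)))
    ((cb (0,1) - cb (1,0)) * (cb (2,3) - cb (3,2)) -
      (cb (0,2) - cb (2,0)) * (cb (1,3) - cb (3,1)) +
      (cb (0,3) - cb (3,0)) * (cb (1,2) - cb (2,1)))
  set ωP : P := s • bP 0 + t • bP 1 with hωP
  have hne : (↑ωP : ⋀[ℂ]^2 V) ≠ 0 := by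
    intro h0
    have h0' : ωP = 0 := Subtype.ext h0
    have hs : s = 0 := by
      have := congrArg (fun z => bP.repr z 0) h0'
      simpa [hωP, Basis.repr_self, Finsupp.single_apply] using this
    have ht : t = 0 := by
      have := congrArg (fun z => bP.repr z 1) h0'
      simpa [hωP, Basis.repr_self, Finsupp.single_apply] using this
    exact hst ⟨hs, ht⟩
  have hω : (↑ωP : ⋀[ℂ]^2 V) =
      (s * (ca (0,1) - ca (1,0)) + t * (cb (0,1) - cb (1,0))) • wedge2 (e 0) (e 1) +
      (s * (ca (0,2) - ca (2,0)) + t * (cb (0,2) - cb (2,0))) • wedge2 (e 0) (e 2) +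
      (s * (ca (0,3) - ca (3,0)) + t * (cb (0,3) - cb (3,0))) • wedge2 (e 0) (e 3) +
      (s * (ca (1,2) - ca (2,1)) + t * (cb (1,2) - cb (2,1))) • wedge2 (e 1) (e 2) +
      (s * (ca (1,3) - ca (3,1)) + t * (cb (1,3) - cb (3,1))) • wedge2 (e 1) (e 3) +
      (s * (ca (2,3) - ca (3,2)) + t * (cb (2,3) - cb (3,2))) • wedge2 (e 2) (e 3) := by
    rw [hωP]
    push_cast
    rw [ha, hb]
    module
  set x12 : ℂ := s * (ca (0,1) - ca (1,0)) + t * (cb (0,1) - cb (1,0)) with hx12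
  set x13 : ℂ := s * (ca (0,2) - ca (2,0)) + t * (cb (0,2) - cb (2,0)) with hx13
  set x14 : ℂ := s * (ca (0,3) - ca (3,0)) + t * (cb (0,3) - cb (3,0)) with hx14
  set x23 : ℂ := s * (ca (1,2) - ca (2,1)) + t * (cb (1,2) - cb (2,1)) with hx23
  set x24 : ℂ := s * (ca (1,3) - ca (3,1)) + t * (cb (1,3) - cb (3,1)) with hx24
  set x34 : ℂ := s * (ca (2,3) - ca (3,2)) + t * (cb (2,3) - cb (3,2)) with hx34
  have hpf : x12 * x34 - x13 * x24 + x14 * x23 = 0 := by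
    rw [hx12, hx13, hx14, hx23, hx24, hx34]
    linear_combination hroot
  refine ⟨↑ωP, ωP.2, hne, ?_⟩
  by_cases h12 : x12 ≠ 0
  · obtain ⟨a, b, hab⟩ := key (e 0) (e 1) (e 2) (e 3) x12 x13 x14 x23 x24 x34 hpf h12
    exact ⟨a, b, hω.trans hab⟩
  push_neg at h12
  by_cases h13 : x13 ≠ 0
  · obtain ⟨a, b, hab⟩ := key (e 0) (e 2) (e 1) (e 3) x13 x12 x14 (-x23) x34 x24
      (by linear_combination -hpf) h13
    refine ⟨a, b, ?_⟩
    rw [hω, ← hab, wedge2_swap (e 1) (e 2)]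
    module
  push_neg at h13
  by_cases h14 : x14 ≠ 0
  · obtain ⟨a, b, hab⟩ := key (e 0) (e 3) (e 1) (e 2) x14 x12 x13 (-x24) (-x34) x23
      (by linear_combination hpf) h14
    refine ⟨a, b, ?_⟩
    rw [hω, ← hab, wedge2_swap (e 1) (e 3), wedge2_swap (e 2) (e 3)]
    module
  push_neg at h14
  by_cases h23 : x23 ≠ 0
  · obtain ⟨a, b, hab⟩ := key (e 1) (e 2) (e 0) (e 3) x23 (-x12) x24 (-x13) x34 x14
      (by linear_combination hpf) h23
    refine ⟨a, b, ?_⟩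
    rw [hω, ← hab, wedge2_swap (e 0) (e 1), wedge2_swap (e 0) (e 2)]
    module
  push_neg at h23
  by_cases h24 : x24 ≠ 0
  · obtain ⟨a, b, hab⟩ := key (e 1) (e 3) (e 0) (e 2) x24 (-x12) x23 (-x14) (-x34) x13
      (by linear_combination -hpf) h24
    refine ⟨a, b, ?_⟩
    rw [hω, ← hab, wedge2_swap (e 0) (e 1), wedge2_swap (e 0) (e 3), wedge2_swap (e 2) (e 3)]
    module
  push_neg at h24
  by_cases h34 : x34 ≠ 0
  · obtain ⟨a, b, hab⟩ := key (e 2) (e 3) (e 0) (e 1) x34 (-x13) (-x23) (-x14) (-x24) x12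
      (by linear_combination hpf) h34
    refine ⟨a, b, ?_⟩
    rw [hω, ← hab, wedge2_swap (e 0) (e 2), wedge2_swap (e 1) (e 2),
      wedge2_swap (e 0) (e 3), wedge2_swap (e 1) (e 3)]
    module
  push_neg at h34
  exfalso
  apply hne
  rw [hω, h12, h13, h14, h23, h24, h34]
  simp
end

section
/- Let x₀,…,x₅ denote the coordinate functionals on W = ℂ⁶, and let A be the 5×5 skew-symmetric matrix of linear functionals on W with upper-triangular entries A₁₂ = x₀, A₁₃ = x₁, A₁₄ = x₂, A₁₅ = x₃, A₂₃ = x₂, A₂₄ = x₃, A₂₅ = x₄, A₃₄ = x₄, A₃₅ = x₅, A₄₅ = x₀ + x₅. Then for each index i ∈ {1,…,5}, the quadratic form on W given by the Pfaffian of the 4×4 skew-symmetric matrix obtained from A by deleting its i-th row and i-th column (for {j<k<l<m} = {1,…,5}∖{i}, this Pfaffian is w ↦ A_{jk}(w)A_{lm}(w) − A_{jl}(w)A_{km}(w) + A_{jm}(w)A_{kl}(w)) has rank at least 5. -/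
/-!
Every principal Pfaffian is, in suitable coordinates, a sum of hyperbolic products and at most
one square involving five or six independent coordinate functionals. Polarizing such a form
against well-chosen vectors recovers five of the coordinate functionals `proj a`, and these are
linearly independent elements of the range of the polar map.
-/

open Module

open LinearMap (proj range)
open QuadraticMap (polar polarBilin)

theorem card_le_qfRank_of_proj_mem_range {ι : Type*} [Fintype ι] [DecidableEq ι]
    (q : QuadraticForm ℂ (ι → ℂ)) (s : Finset ι)
    (h : ∀ a ∈ s, proj a ∈ range (polarBilin q)) : s.card ≤ qfRank q := by
  have hproj : LinearIndependent ℂ fun a : ι => (proj a : Dual ℂ (ι → ℂ)) := by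
    have hdual : ⇑(Pi.basisFun ℂ ι).dualBasis = fun a => proj a := by
      ext a x
      simp
    exact hdual ▸ (Pi.basisFun ℂ ι).dualBasis.linearIndependent
  have hs : LinearIndependent ℂ fun a : s => (⟨proj a.1, h a a.2⟩ : range (polarBilin q)) :=
    .of_comp (range _).subtype (hproj.comp _ Subtype.val_injective)
  simpa [qfRank] using hs.fintype_card_le_finrank

theorem proj_mem_range_polarBilin {ι : Type*} (q : QuadraticForm ℂ (ι → ℂ)) {a : ι}
    (u : ι → ℂ) (hu : ∀ y, polar q u y = y a) : proj a ∈ range (polarBilin q) :=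
  ⟨u, LinearMap.ext hu⟩

section Pfaffians

variable (q : QuadraticForm ℂ (Fin 6 → ℂ))

theorem five_le_qfRank_pfaffian_omit_zero
    (hq : ∀ y, q y = y 2 * (y 0 + y 5) - y 3 * y 5 + y 4 * y 4) : 5 ≤ qfRank q := by
  refine card_le_qfRank_of_proj_mem_range q {0, 2, 3, 4, 5} ?_
  simp only [Finset.mem_insert, Finset.mem_singleton, forall_eq_or_imp, forall_eq]
  refine ⟨proj_mem_range_polarBilin q ![0, 0, 1, 1, 0, 0] ?_,
    proj_mem_range_polarBilin q ![1, 0, 0, 0, 0, 0] ?_,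
    proj_mem_range_polarBilin q ![1, 0, 0, 0, 0, -1] ?_,
    proj_mem_range_polarBilin q ![0, 0, 0, 0, 2⁻¹, 0] ?_,
    proj_mem_range_polarBilin q ![0, 0, 0, -1, 0, 0] ?_⟩ <;>
  · intro y
    simp only [polar, hq, Pi.add_apply]
    simp
    ring

theorem five_le_qfRank_pfaffian_omit_one
    (hq : ∀ y, q y = y 1 * (y 0 + y 5) - y 2 * y 5 + y 3 * y 4) : 5 ≤ qfRank q := by
  refine card_le_qfRank_of_proj_mem_range q {0, 1, 3, 4, 5} ?_
  simp only [Finset.mem_insert, Finset.mem_singleton, forall_eq_or_imp, forall_eq]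
  refine ⟨proj_mem_range_polarBilin q ![0, 1, 1, 0, 0, 0] ?_,
    proj_mem_range_polarBilin q ![1, 0, 0, 0, 0, 0] ?_,
    proj_mem_range_polarBilin q ![0, 0, 0, 0, 1, 0] ?_,
    proj_mem_range_polarBilin q ![0, 0, 0, 1, 0, 0] ?_,
    proj_mem_range_polarBilin q ![0, 0, -1, 0, 0, 0] ?_⟩ <;>
  · intro y
    simp only [polar, hq, Pi.add_apply]
    simp
    ring

theorem five_le_qfRank_pfaffian_omit_two
    (hq : ∀ y, q y = y 0 * (y 0 + y 5) - y 2 * y 4 + y 3 * y 3) : 5 ≤ qfRank q := by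
  refine card_le_qfRank_of_proj_mem_range q {0, 2, 3, 4, 5} ?_
  simp only [Finset.mem_insert, Finset.mem_singleton, forall_eq_or_imp, forall_eq]
  refine ⟨proj_mem_range_polarBilin q ![0, 0, 0, 0, 0, 1] ?_,
    proj_mem_range_polarBilin q ![0, 0, 0, 0, -1, 0] ?_,
    proj_mem_range_polarBilin q ![0, 0, 0, 2⁻¹, 0, 0] ?_,
    proj_mem_range_polarBilin q ![0, 0, -1, 0, 0, 0] ?_,
    proj_mem_range_polarBilin q ![1, 0, 0, 0, 0, -2] ?_⟩ <;>
  · intro y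
    simp only [polar, hq, Pi.add_apply]
    simp
    ring

theorem five_le_qfRank_pfaffian_omit_three
    (hq : ∀ y, q y = y 0 * y 5 - y 1 * y 4 + y 3 * y 2) : 5 ≤ qfRank q := by
  refine card_le_qfRank_of_proj_mem_range q {0, 1, 2, 3, 4} ?_
  simp only [Finset.mem_insert, Finset.mem_singleton, forall_eq_or_imp, forall_eq]
  refine ⟨proj_mem_range_polarBilin q ![0, 0, 0, 0, 0, 1] ?_,
    proj_mem_range_polarBilin q ![0, 0, 0, 0, -1, 0] ?_,
    proj_mem_range_polarBilin q ![0, 0, 0, 1, 0, 0] ?_,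
    proj_mem_range_polarBilin q ![0, 0, 1, 0, 0, 0] ?_,
    proj_mem_range_polarBilin q ![0, -1, 0, 0, 0, 0] ?_⟩ <;>
  · intro y
    simp only [polar, hq, Pi.add_apply]
    simp
    ring

theorem five_le_qfRank_pfaffian_omit_four
    (hq : ∀ y, q y = y 0 * y 4 - y 1 * y 3 + y 2 * y 2) : 5 ≤ qfRank q := by
  refine card_le_qfRank_of_proj_mem_range q {0, 1, 2, 3, 4} ?_
  simp only [Finset.mem_insert, Finset.mem_singleton, forall_eq_or_imp, forall_eq]
  refine ⟨proj_mem_range_polarBilin q ![0, 0, 0, 0, 1, 0] ?_,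
    proj_mem_range_polarBilin q ![0, 0, 0, -1, 0, 0] ?_,
    proj_mem_range_polarBilin q ![0, 0, 2⁻¹, 0, 0, 0] ?_,
    proj_mem_range_polarBilin q ![0, -1, 0, 0, 0, 0] ?_,
    proj_mem_range_polarBilin q ![1, 0, 0, 0, 0, 0] ?_⟩ <;>
  · intro y
    simp only [polar, hq, Pi.add_apply]
    simp
    ring

end Pfaffians

theorem principal_pfaffians_rank_ge_five_general
    (x : Fin 6 → Module.Dual ℂ (Fin 6 → ℂ))
    (hx : ∀ i, x i = LinearMap.proj i)
    (A : Matrix (Fin 5) (Fin 5) (Module.Dual ℂ (Fin 6 → ℂ)))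
    (h12 : A 0 1 = x 0) (h13 : A 0 2 = x 1) (h14 : A 0 3 = x 2) (h15 : A 0 4 = x 3)
    (h23 : A 1 2 = x 2) (h24 : A 1 3 = x 3) (h25 : A 1 4 = x 4)
    (h34 : A 2 3 = x 4) (h35 : A 2 4 = x 5) (h45 : A 3 4 = x 0 + x 5) :
    ∀ i j k l m : Fin 5, j < k → k < l → l < m →
      i ≠ j → i ≠ k → i ≠ l → i ≠ m →
      5 ≤ qfRank (QuadraticMap.linMulLin (A j k) (A l m) -
        QuadraticMap.linMulLin (A j l) (A k m) +
        QuadraticMap.linMulLin (A j m) (A k l)) := by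
  intro i j k l m hjk hkl hlm hij hik hil him
  obtain rfl | rfl | rfl | rfl | rfl : i = 0 ∨ i = 1 ∨ i = 2 ∨ i = 3 ∨ i = 4 := by omega
  · obtain ⟨rfl, rfl, rfl, rfl⟩ : j = 1 ∧ k = 2 ∧ l = 3 ∧ m = 4 := by omega
    exact five_le_qfRank_pfaffian_omit_zero _ fun y => by
      simp [h23, h24, h25, h34, h35, h45, hx, mul_add]
  · obtain ⟨rfl, rfl, rfl, rfl⟩ : j = 0 ∧ k = 2 ∧ l = 3 ∧ m = 4 := by omega
    exact five_le_qfRank_pfaffian_omit_one _ fun y => by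
      simp [h13, h14, h15, h34, h35, h45, hx, mul_add]
  · obtain ⟨rfl, rfl, rfl, rfl⟩ : j = 0 ∧ k = 1 ∧ l = 3 ∧ m = 4 := by omega
    exact five_le_qfRank_pfaffian_omit_two _ fun y => by
      simp [h12, h14, h15, h24, h25, h45, hx, mul_add]
  · obtain ⟨rfl, rfl, rfl, rfl⟩ : j = 0 ∧ k = 1 ∧ l = 2 ∧ m = 4 := by omega
    exact five_le_qfRank_pfaffian_omit_three _ fun y => by
      simp [h12, h13, h15, h23, h25, h35, hx]
  · obtain ⟨rfl, rfl, rfl, rfl⟩ : j = 0 ∧ k = 1 ∧ l = 2 ∧ m = 3 := by omega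
    exact five_le_qfRank_pfaffian_omit_four _ fun y => by
      simp [h12, h13, h14, h23, h24, h34, hx]

/-- Let `x₀, …, x₅` be the coordinate functionals on `W = ℂ⁶` and let `A` be the
`5 × 5` skew-symmetric matrix of linear functionals with upper-triangular entries
`A₁₂ = x₀, A₁₃ = x₁, A₁₄ = x₂, A₁₅ = x₃, A₂₃ = x₂, A₂₄ = x₃, A₂₅ = x₄, A₃₄ = x₄, A₃₅ = x₅,`
`A₄₅ = x₀ + x₅`. Then each `4 × 4` principal Pfaffian of `A` (obtained by deleting the `i`-th
row and column, i.e. the quadratic form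
`w ↦ A j k w * A l m w - A j l w * A k m w + A j m w * A k l w` for `j < k < l < m`
the indices different from `i`) has rank at least `5`. -/
theorem principal_pfaffians_rank_ge_five
    (x : Fin 6 → Module.Dual ℂ (Fin 6 → ℂ))
    (hx : ∀ i, x i = LinearMap.proj i)
    (A : Matrix (Fin 5) (Fin 5) (Module.Dual ℂ (Fin 6 → ℂ)))
    (hskew : ∀ i j, A j i = -A i j)
    (h12 : A 0 1 = x 0) (h13 : A 0 2 = x 1) (h14 : A 0 3 = x 2) (h15 : A 0 4 = x 3)
    (h23 : A 1 2 = x 2) (h24 : A 1 3 = x 3) (h25 : A 1 4 = x 4)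
    (h34 : A 2 3 = x 4) (h35 : A 2 4 = x 5) (h45 : A 3 4 = x 0 + x 5) :
    ∀ i j k l m : Fin 5, j < k → k < l → l < m →
      i ≠ j → i ≠ k → i ≠ l → i ≠ m →
      5 ≤ qfRank (QuadraticMap.linMulLin (A j k) (A l m) -
        QuadraticMap.linMulLin (A j l) (A k m) +
        QuadraticMap.linMulLin (A j m) (A k l)) :=
  principal_pfaffians_rank_ge_five_general x hx A h12 h13 h14 h15 h23 h24 h25 h34 h35 h45
end
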